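/- arXiv:2305.15416 — 2 statements merged into one kernel-verified Lean document; each statement's English description precedes it below -/
import Mathlib

section
/- Let Y be the blow-up of ℙ² at n points and L the pull-back of a line. Then all but finitely many reduced and irreducible curves C on Y satisfy C² ≥ min{−(1/6)·n·(C·L + 3), −2}. -/
/-- An axiomatization of the divisor theory of a smooth complex projective
surface `X`: the group `Div` of divisors, the intersection pairing, the
canonical divisor `K`, the holomorphic Euler characteristic `χ(O_X)`, the
topological Euler number `c₂(X)`, dimensions `h⁰, h¹, h²` of cohomology of
divisors, the predicates singling out reduced irreducible curves, effective
divisors, components, linear equivalence and nefness, the arithmetic genus of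
curves, and the standard facts of surface theory relating these notions. -/
structure AlgSurface (Div : Type) [AddCommGroup Div] where
  /-- the intersection pairing -/
  inter : Div → Div → ℤ
  inter_symm : ∀ D E, inter D E = inter E D
  inter_add_left : ∀ D E F, inter (D + E) F = inter D F + inter E F
  /-- the canonical divisor -/
  K : Div
  /-- `χ(O_X)` -/
  chiO : ℤ
  /-- the topological Euler number `c₂(X)` -/
  c2 : ℤ
  h0 : Div → ℕ
  h1 : Div → ℕ
  h2 : Div → ℕ
  /-- `Curve C` : `C` is a reduced irreducible curve on `X` -/
  Curve : Div → Prop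
  /-- `Effective D` : `D` is an effective divisor on `X` -/
  Effective : Div → Prop
  /-- `IsComponent C E` : the curve `C` is a component of (the support of) `E` -/
  IsComponent : Div → Div → Prop
  /-- linear equivalence of divisors -/
  LinEquiv : Div → Div → Prop
  /-- `Nef L` : the divisor `L` is nef -/
  Nef : Div → Prop
  /-- the arithmetic genus of a curve -/
  pa : Div → ℤ
  /-- the arithmetic genus of a reduced irreducible curve is nonnegative -/
  pa_nonneg : ∀ C, Curve C → 0 ≤ pa C
  /-- Serre duality: `h²(D) = h⁰(K - D)` -/
  serre : ∀ D, h2 D = h0 (K - D)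
  /-- the adjunction formula `C² + K·C = 2pₐ(C) - 2` -/
  adjunction : ∀ C, Curve C → inter C C + inter K C = 2 * pa C - 2
  /-- Riemann–Roch combined with Serre duality:
  `h⁰(D) - h¹(D) + h⁰(K - D) = χ(O_X) + D·(D - K)/2` -/
  riemann_roch : ∀ D, (h0 D : ℚ) - (h1 D : ℚ) + (h0 (K - D) : ℚ)
      = (chiO : ℚ) + (inter D (D - K) : ℚ) / 2
  /-- linearly equivalent divisors have the same intersection numbers -/
  linEquiv_inter : ∀ D D' F, LinEquiv D D' → inter D F = inter D' F
  /-- `h⁰(D) > 0` iff `D` is linearly equivalent to an effective divisor -/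
  h0_pos_iff : ∀ D, 0 < h0 D ↔ ∃ E, Effective E ∧ LinEquiv E D
  /-- a reduced irreducible curve is an effective divisor -/
  curve_effective : ∀ C, Curve C → Effective C
  /-- a nef divisor meets every effective divisor nonnegatively -/
  nef_inter_eff : ∀ L E, Nef L → Effective E → 0 ≤ inter L E
  /-- an effective divisor meets every curve which is not one of its
  components nonnegatively -/
  inter_eff_curve_nonneg : ∀ E C, Effective E → Curve C → ¬ IsComponent C E →
      0 ≤ inter E C
  /-- an effective divisor has only finitely many components -/
  components_finite : ∀ E, Effective E → {C | IsComponent C E}.Finite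
  /-- `h⁰` does not decrease when an effective divisor is added -/
  h0_add_eff : ∀ D E, Effective E → h0 D ≤ h0 (D + E)

/-- The blow-up `Y` of the complex projective plane `ℙ²` at `n` distinct
points, with the pull-back (total transform) `L` of a line and the exceptional
divisors `Exc i`: the standard intersection numbers of `L` and the `Exc i`,
the canonical divisor `K_Y = -3L + ∑ Exc i`, the nefness of `L`,
`χ(O_Y) = 1` and `c₂(Y) = 3 + n`. -/
structure BlowupP2 (n : ℕ) (Div : Type) [AddCommGroup Div] extends
    AlgSurface Div where
  /-- the pull-back of a line in `ℙ²` -/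
  L : Div
  /-- the exceptional divisors over the `n` blown-up points -/
  Exc : Fin n → Div
  inter_L_L : inter L L = 1
  inter_L_Exc : ∀ i, inter L (Exc i) = 0
  inter_Exc : ∀ i j, inter (Exc i) (Exc j) = if i = j then -1 else 0
  K_eq : K = -((3 : ℤ) • L) + ∑ i, Exc i
  L_nef : Nef L
  chiO_eq : chiO = 1
  c2_eq : c2 = 3 + n

namespace BlowupP2

variable {n : ℕ} {Div : Type} [AddCommGroup Div] (Y : BlowupP2 n Div)

/-- For fixed `F`, the map `D ↦ D·F` as an additive hom. -/
def interHom (F : Div) : Div →+ ℤ :=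
  AddMonoidHom.mk' (fun D => Y.inter D F) (fun a b => Y.inter_add_left a b F)

@[simp] lemma interHom_apply (F D : Div) : Y.interHom F D = Y.inter D F := rfl

lemma inter_smul_left (m : ℤ) (D F : Div) :
    Y.inter (m • D) F = m * Y.inter D F := by
  have := map_zsmul (Y.interHom F) m D
  simpa [smul_eq_mul] using this

lemma inter_sub_left (D E F : Div) :
    Y.inter (D - E) F = Y.inter D F - Y.inter E F := by
  have := map_sub (Y.interHom F) D E
  simpa using this

lemma inter_neg_left (D F : Div) : Y.inter (-D) F = - Y.inter D F := by
  have := map_neg (Y.interHom F) D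
  simpa using this

lemma inter_sum_left {ι : Type*} (s : Finset ι) (f : ι → Div) (F : Div) :
    Y.inter (∑ i ∈ s, f i) F = ∑ i ∈ s, Y.inter (f i) F := by
  exact map_sum (Y.interHom F) f s

lemma inter_K_L : Y.inter Y.K Y.L = -3 := by
  rw [Y.K_eq, Y.inter_add_left, Y.inter_neg_left, Y.inter_smul_left,
    Y.inter_sum_left, Y.inter_L_L]
  have h : ∀ i, Y.inter (Y.Exc i) Y.L = 0 := fun i => by
    rw [Y.inter_symm]; exact Y.inter_L_Exc i
  simp [h]

lemma inter_K_Exc (i : Fin n) : Y.inter Y.K (Y.Exc i) = -1 := by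
  rw [Y.K_eq, Y.inter_add_left, Y.inter_neg_left, Y.inter_smul_left,
    Y.inter_sum_left, Y.inter_L_Exc]
  simp [Y.inter_Exc]

lemma inter_K_K : Y.inter Y.K Y.K = 9 - n := by
  nth_rewrite 1 [Y.K_eq]
  rw [Y.inter_add_left, Y.inter_neg_left, Y.inter_smul_left, Y.inter_sum_left]
  have h1 : Y.inter Y.L Y.K = -3 := by rw [Y.inter_symm]; exact Y.inter_K_L
  have h2 : ∀ i, Y.inter (Y.Exc i) Y.K = -1 := fun i => by
    rw [Y.inter_symm]; exact Y.inter_K_Exc i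
  rw [h1]
  simp only [h2, Finset.sum_const, Finset.card_univ, Fintype.card_fin,
    smul_eq_mul]
  ring

end BlowupP2

/-- Theorem 1: on the blow-up `Y` of `ℙ²` at `n` points with `L` the
pull-back of a line, all but finitely many reduced irreducible curves `C`
on `Y` satisfy `C² ≥ min {-(1/6)·n·(C·L + 3), -2}`. -/
theorem stmt9 (n : ℕ) {Div : Type} [AddCommGroup Div] (Y : BlowupP2 n Div) :
    ∃ B : Set Div, B.Finite ∧ ∀ C, Y.Curve C → C ∉ B →
      min (-(1 / 6 : ℚ) * (n : ℚ) * ((Y.inter C Y.L : ℚ) + 3)) (-2)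
        ≤ (Y.inter C C : ℚ) := by
  classical
  set t : ℕ := n / 6 with ht
  have h6t : 6 * t ≤ n := by omega
  have htn : n ≤ 6 * t + 5 := by omega
  set D : Div := (t : ℤ) • Y.L - Y.K with hD
  have hKL : Y.inter Y.K Y.L = -3 := Y.inter_K_L
  have hLK : Y.inter Y.L Y.K = -3 := by rw [Y.inter_symm]; exact hKL
  have hKK : Y.inter Y.K Y.K = 9 - n := Y.inter_K_K
  -- intersection of D with anything
  have hDC : ∀ C, Y.inter D C = (t : ℤ) * Y.inter Y.L C - Y.inter Y.K C := by
    intro C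
    rw [hD, Y.inter_sub_left, Y.inter_smul_left]
  have hDL : Y.inter D Y.L = (t : ℤ) + 3 := by
    rw [hDC, Y.inter_L_L, hKL]; ring
  have hDK : Y.inter D Y.K = -3 * t - (9 - n) := by
    rw [hDC, hLK, hKK]; ring
  have hDD : Y.inter D D = (t : ℤ) * ((t : ℤ) + 3) - (-3 * t - (9 - n)) := by
    rw [hDC]
    have h1 : Y.inter Y.L D = (t : ℤ) + 3 := by rw [Y.inter_symm]; exact hDL
    have h2 : Y.inter Y.K D = -3 * t - (9 - n) := by
      rw [Y.inter_symm]; exact hDK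
    rw [h1, h2]
  have hDDK : Y.inter D (D - Y.K) = (t : ℤ) ^ 2 + 9 * t + 18 - 2 * n := by
    rw [Y.inter_symm, Y.inter_sub_left]
    have h1 : Y.inter D D = (t : ℤ) * ((t : ℤ) + 3) - (-3 * t - (9 - n)) := hDD
    have h2 : Y.inter Y.K D = -3 * t - (9 - n) := by rw [Y.inter_symm]; exact hDK
    rw [Y.inter_symm D D] at h1
    rw [h1, h2]; ring
  -- h⁰(K - D) = 0
  have hKD0 : Y.h0 (Y.K - D) = 0 := by
    by_contra h
    obtain ⟨E, hEeff, hElin⟩ := (Y.h0_pos_iff _).mp (Nat.pos_of_ne_zero h)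
    have h1 : 0 ≤ Y.inter Y.L E := Y.nef_inter_eff _ _ Y.L_nef hEeff
    have h2 : Y.inter E Y.L = Y.inter (Y.K - D) Y.L :=
      Y.linEquiv_inter _ _ _ hElin
    have h3 : Y.inter (Y.K - D) Y.L = -(t : ℤ) - 6 := by
      rw [Y.inter_sub_left, hKL, hDL]; ring
    have h4 : Y.inter Y.L E = Y.inter E Y.L := Y.inter_symm _ _
    omega
  -- Riemann-Roch gives h⁰(D) > 0
  have hRR := Y.riemann_roch D
  rw [hKD0, Y.chiO_eq, hDDK] at hRR
  have h0D : 0 < Y.h0 D := by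
    by_contra h
    have h0z : Y.h0 D = 0 := by omega
    rw [h0z] at hRR
    have hh1 : (0 : ℚ) ≤ (Y.h1 D : ℚ) := Nat.cast_nonneg _
    have htq : (n : ℚ) ≤ 6 * (t : ℚ) + 5 := by exact_mod_cast htn
    push_cast at hRR
    nlinarith [sq_nonneg ((t : ℚ) * 2 - 3), hh1, htq]
  obtain ⟨E, hEeff, hElin⟩ := (Y.h0_pos_iff D).mp h0D
  refine ⟨{C | Y.IsComponent C E}, Y.components_finite E hEeff, ?_⟩
  intro C hC hCB
  have hd0 : 0 ≤ Y.inter Y.L C := Y.nef_inter_eff _ _ Y.L_nef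
    (Y.curve_effective C hC)
  have hEC : 0 ≤ Y.inter E C := Y.inter_eff_curve_nonneg E C hEeff hC hCB
  have hDCge : (0 : ℤ) ≤ (t : ℤ) * Y.inter Y.L C - Y.inter Y.K C := by
    rw [← hDC C, ← Y.linEquiv_inter E D C hElin]; exact hEC
  have hadj := Y.adjunction C hC
  have hpa := Y.pa_nonneg C hC
  have hCC : -2 - (t : ℤ) * Y.inter Y.L C ≤ Y.inter C C := by
    have : Y.inter Y.K C = Y.inter C Y.K := Y.inter_symm _ _
    omega
  have hCL : Y.inter C Y.L = Y.inter Y.L C := Y.inter_symm _ _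
  rcases le_or_gt n 3 with hn | hn
  · have ht0 : t = 0 := by omega
    refine le_trans (min_le_right _ _) ?_
    have : (-2 : ℤ) ≤ Y.inter C C := by
      rw [ht0] at hCC; simpa using hCC
    exact_mod_cast this
  · refine le_trans (min_le_left _ _) ?_
    have h1 : (6 * (t : ℚ)) ≤ (n : ℚ) := by exact_mod_cast h6t
    have h2 : (0 : ℚ) ≤ ((Y.inter Y.L C : ℤ) : ℚ) := by exact_mod_cast hd0
    have h3 : (4 : ℚ) ≤ (n : ℚ) := by exact_mod_cast hn
    have h4 : (-2 : ℚ) - (t : ℚ) * ((Y.inter Y.L C : ℤ) : ℚ)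
        ≤ ((Y.inter C C : ℤ) : ℚ) := by exact_mod_cast hCC
    rw [hCL]
    nlinarith [mul_nonneg (sub_nonneg.mpr h1) h2]
end

section
/- Let Y be the blow-up of ℙ² at n points and L the pull-back of a line. Then all but finitely many reduced and irreducible curves C on Y satisfy C² ≥ min{−(1/12)·n·(C·L + 27), −2}. -/
section Helpers

variable {Div : Type} [AddCommGroup Div]

lemma AlgSurface.inter_zero_left (Y : AlgSurface Div) (E : Div) : Y.inter 0 E = 0 := by
  have h := Y.inter_add_left 0 0 E
  rw [add_zero] at h
  omega

lemma AlgSurface.inter_neg_left (Y : AlgSurface Div) (D E : Div) :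
    Y.inter (-D) E = -(Y.inter D E) := by
  have h := Y.inter_add_left (-D) D E
  rw [neg_add_cancel, Y.inter_zero_left] at h
  omega

lemma AlgSurface.inter_sub_left (Y : AlgSurface Div) (D E F : Div) :
    Y.inter (D - E) F = Y.inter D F - Y.inter E F := by
  rw [sub_eq_add_neg, Y.inter_add_left, Y.inter_neg_left]
  ring

lemma AlgSurface.inter_smul_left (Y : AlgSurface Div) (z : ℤ) (D E : Div) :
    Y.inter (z • D) E = z * Y.inter D E := by
  induction z using Int.induction_on with
  | zero => rw [zero_smul, Y.inter_zero_left]; ring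
  | succ k ih => rw [add_smul, one_smul, Y.inter_add_left, ih]; ring
  | pred k ih => rw [sub_smul, one_smul, Y.inter_sub_left, ih]; ring

lemma AlgSurface.inter_sum_left (Y : AlgSurface Div) {ι : Type} (s : Finset ι)
    (f : ι → Div) (E : Div) :
    Y.inter (∑ i ∈ s, f i) E = ∑ i ∈ s, Y.inter (f i) E := by
  classical
  induction s using Finset.induction_on with
  | empty => simp [Y.inter_zero_left]
  | insert a s h ih => rw [Finset.sum_insert h, Y.inter_add_left, ih, Finset.sum_insert h]

lemma AlgSurface.inter_add_right (Y : AlgSurface Div) (D E F : Div) :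
    Y.inter D (E + F) = Y.inter D E + Y.inter D F := by
  rw [Y.inter_symm D (E + F), Y.inter_add_left, Y.inter_symm E D, Y.inter_symm F D]

lemma AlgSurface.inter_neg_right (Y : AlgSurface Div) (D E : Div) :
    Y.inter D (-E) = -(Y.inter D E) := by
  rw [Y.inter_symm D (-E), Y.inter_neg_left, Y.inter_symm E D]

lemma AlgSurface.inter_sub_right (Y : AlgSurface Div) (D E F : Div) :
    Y.inter D (E - F) = Y.inter D E - Y.inter D F := by
  rw [Y.inter_symm D (E - F), Y.inter_sub_left, Y.inter_symm E D, Y.inter_symm F D]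

lemma AlgSurface.inter_smul_right (Y : AlgSurface Div) (z : ℤ) (D E : Div) :
    Y.inter D (z • E) = z * Y.inter D E := by
  rw [Y.inter_symm D (z • E), Y.inter_smul_left, Y.inter_symm E D]

lemma AlgSurface.inter_sum_right (Y : AlgSurface Div) {ι : Type} (s : Finset ι)
    (f : ι → Div) (E : Div) :
    Y.inter E (∑ i ∈ s, f i) = ∑ i ∈ s, Y.inter E (f i) := by
  rw [Y.inter_symm E, Y.inter_sum_left]
  exact Finset.sum_congr rfl fun i _ => Y.inter_symm (f i) E

lemma BlowupP2.finalStep (N p v G : ℚ) (hN : 0 ≤ N) (hkey : N * G + N * p ≤ p ^ 2)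
    (hchain : v ^ 2 ≤ N * G + N * v) (hpv : p < v) (hplb : 1 + 7 / 3 * N ≤ p) : False := by
  have h1 : 0 < v - p := by linarith
  have h2 : 0 < v + p - N := by linarith
  nlinarith [mul_pos h1 h2]

/-- The purely numerical endgame of the proof of Theorem 2. -/
lemma BlowupP2.endgame (N D P E Q c : ℚ) (hN : 0 ≤ N) (hD01 : D = 0 ∨ 1 ≤ D)
    (hP : 0 ≤ P) (hadj : c + (-3 * D + E) = 2 * P - 2) (hhodge : Q + c ≤ D ^ 2)
    (hcs : E ^ 2 ≤ N * Q) (hend : E ≤ N * D)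
    (hv1 : c < -(1 / 12) * N * (D + 27)) (hv2 : c < -2) : False := by
  rcases hD01 with h | h
  · subst h
    have hE0 : E ≤ 0 := by simpa using hend
    linarith
  · -- key polynomial inequality
    have hD1 : (0 : ℚ) ≤ D - 1 := by linarith
    have hkey : N * ((D - 1) * (D - 2))
        + N * (3 * D + N * D / 12 + 9 / 4 * N - 2)
        ≤ (3 * D + N * D / 12 + 9 / 4 * N - 2) ^ 2 := by
      have cert : 144 * ((3 * D + N * D / 12 + 9 / 4 * N - 2) ^ 2
          - N * (3 * D + N * D / 12 + 9 / 4 * N - 2) - N * ((D - 1) * (D - 2)))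
          = ((N - 36) * (D - 1)) ^ 2 + 44 * (N ^ 2 * (D - 1)) + 1752 * (N * (D - 1))
            + 864 * (D - 1) + 448 * N ^ 2 + 528 * N + 144 := by ring
      nlinarith [sq_nonneg ((N - 36) * (D - 1)), mul_nonneg (mul_nonneg hN hN) hD1,
        mul_nonneg hN hD1, hD1, mul_nonneg hN hN, hN, cert]
    have hp_lb : 1 + 7 / 3 * N ≤ 3 * D + N * D / 12 + 9 / 4 * N - 2 := by
      nlinarith [mul_nonneg hN hD1]
    have hpv : 3 * D + N * D / 12 + 9 / 4 * N - 2 < E - 2 * P := by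
      nlinarith [hv1]
    have hv0 : (0 : ℚ) < E - 2 * P := by linarith
    have hE2 : (E - 2 * P) ^ 2 ≤ E ^ 2 := by nlinarith [hP, hv0]
    have hQub : Q ≤ (D - 1) * (D - 2) + (E - 2 * P) := by nlinarith [hhodge, hadj]
    have hNQ : N * Q ≤ N * ((D - 1) * (D - 2) + (E - 2 * P)) :=
      mul_le_mul_of_nonneg_left hQub hN
    have hchain : (E - 2 * P) ^ 2 ≤ N * ((D - 1) * (D - 2)) + N * (E - 2 * P) := by
      nlinarith [hcs, hE2, hNQ]
    exact BlowupP2.finalStep N (3 * D + N * D / 12 + 9 / 4 * N - 2) (E - 2 * P)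
      ((D - 1) * (D - 2)) hN hkey hchain hpv hp_lb

end Helpers

/-- Theorem 2: on the blow-up `Y` of `ℙ²` at `n` points with `L` the
pull-back of a line, all but finitely many reduced irreducible curves `C`
on `Y` satisfy `C² ≥ min {-(1/12)·n·(C·L + 27), -2}`. -/
theorem stmt10 (n : ℕ) {Div : Type} [AddCommGroup Div] (Y : BlowupP2 n Div) :
    ∃ B : Set Div, B.Finite ∧ ∀ C, Y.Curve C → C ∉ B →
      min (-(1 / 12 : ℚ) * (n : ℚ) * ((Y.inter C Y.L : ℚ) + 27)) (-2)
        ≤ (Y.inter C C : ℚ) := by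
  classical
  -- basic intersection numbers
  have hExcL : ∀ i : Fin n, Y.inter (Y.Exc i) Y.L = 0 := fun i => by
    rw [Y.inter_symm]; exact Y.inter_L_Exc i
  have hKL : Y.inter Y.K Y.L = -3 := by
    rw [Y.K_eq, Y.inter_add_left, Y.toAlgSurface.inter_neg_left,
      Y.toAlgSurface.inter_smul_left, Y.inter_L_L, Y.toAlgSurface.inter_sum_left,
      Finset.sum_eq_zero (fun i _ => hExcL i)]
    ring
  -- vanishing of h0 for divisors of negative degree
  have h0zero : ∀ D : Div, Y.inter D Y.L < 0 → Y.h0 D = 0 := by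
    intro D hD
    by_contra hne
    obtain ⟨E, hEeff, hElin⟩ := (Y.h0_pos_iff D).mp (Nat.pos_of_ne_zero hne)
    have h1 : Y.inter E Y.L = Y.inter D Y.L := Y.linEquiv_inter E D Y.L hElin
    have h2 := Y.nef_inter_eff Y.L E Y.L_nef hEeff
    rw [Y.inter_symm Y.L E] at h2
    omega
  have hExcExcL : ∀ i : Fin n, Y.inter (Y.Exc i) (Y.Exc i) = -1 := fun i => by
    rw [Y.inter_Exc i i, if_pos rfl]
  have hExcK : ∀ i : Fin n, Y.inter (Y.Exc i) Y.K = -1 := by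
    intro i
    rw [Y.inter_symm (Y.Exc i) Y.K, Y.K_eq, Y.inter_add_left,
      Y.toAlgSurface.inter_neg_left, Y.toAlgSurface.inter_smul_left,
      Y.inter_L_Exc i, Y.toAlgSurface.inter_sum_left]
    have : (∑ j : Fin n, Y.inter (Y.Exc j) (Y.Exc i)) = -1 := by
      have h : ∀ j : Fin n, Y.inter (Y.Exc j) (Y.Exc i) = if j = i then (-1:ℤ) else 0 := by
        intro j; rw [Y.inter_Exc j i]
      rw [Finset.sum_congr rfl (fun j _ => h j), Finset.sum_ite_eq' Finset.univ i
        (fun _ => (-1 : ℤ)), if_pos (Finset.mem_univ i)]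
    rw [this]; ring
  have hLK : Y.inter Y.L Y.K = -3 := by rw [Y.inter_symm]; exact hKL
  -- effective divisors linearly equivalent to L - Exc i
  have hFex : ∀ i : Fin n, ∃ F, Y.Effective F ∧ Y.LinEquiv F (Y.L - Y.Exc i) := by
    intro i
    have hDL : Y.inter (Y.L - Y.Exc i) Y.L = 1 := by
      rw [Y.toAlgSurface.inter_sub_left, Y.inter_L_L, hExcL i]; ring
    have hKD : Y.h0 (Y.K - (Y.L - Y.Exc i)) = 0 := by
      apply h0zero
      rw [Y.toAlgSurface.inter_sub_left, hKL, hDL]; norm_num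
    have hDD : Y.inter (Y.L - Y.Exc i) (Y.L - Y.Exc i) = 0 := by
      rw [Y.toAlgSurface.inter_sub_left, Y.toAlgSurface.inter_sub_right,
        Y.toAlgSurface.inter_sub_right, Y.inter_L_L, Y.inter_L_Exc i,
        Y.inter_symm (Y.Exc i) Y.L, Y.inter_L_Exc i, hExcExcL i]
      ring
    have hDK : Y.inter (Y.L - Y.Exc i) Y.K = -2 := by
      rw [Y.toAlgSurface.inter_sub_left, hLK, hExcK i]; ring
    have hDDK : Y.inter (Y.L - Y.Exc i) (Y.L - Y.Exc i - Y.K) = 2 := by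
      rw [Y.toAlgSurface.inter_sub_right, hDD, hDK]; ring
    have hRR := Y.riemann_roch (Y.L - Y.Exc i)
    rw [Y.chiO_eq, hKD, hDDK] at hRR
    have hpos : 0 < Y.h0 (Y.L - Y.Exc i) := by
      by_contra hle
      have h0e : Y.h0 (Y.L - Y.Exc i) = 0 := by omega
      rw [h0e] at hRR
      have := Nat.cast_nonneg (α := ℚ) (Y.h1 (Y.L - Y.Exc i))
      push_cast at hRR
      linarith
    exact (Y.h0_pos_iff _).mp hpos
  choose F hFeff hFlin using hFex
  refine ⟨⋃ i, {C | Y.IsComponent C (F i)},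
    Set.finite_iUnion (fun i => Y.components_finite (F i) (hFeff i)), ?_⟩
  intro C hC hCB
  set d : ℤ := Y.inter C Y.L with hd_def
  set m : Fin n → ℤ := fun i => Y.inter C (Y.Exc i) with hm_def
  set Q : ℤ := ∑ i, m i ^ 2 with hQ_def
  set e : ℤ := ∑ i, m i with he_def
  set c : ℤ := Y.inter C C with hc_def
  have hLC : Y.inter Y.L C = d := by rw [hd_def, Y.inter_symm]
  have hExcC : ∀ i, Y.inter (Y.Exc i) C = m i := fun i => by
    rw [hm_def, Y.inter_symm]
  -- d ≥ 0
  have hd0 : 0 ≤ d := by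
    have := Y.nef_inter_eff Y.L C Y.L_nef (Y.curve_effective C hC)
    rwa [hLC] at this
  -- m i ≤ d
  have hmd : ∀ i, m i ≤ d := by
    intro i
    have hnc : ¬ Y.IsComponent C (F i) := fun h => hCB (Set.mem_iUnion.mpr ⟨i, h⟩)
    have h1 := Y.inter_eff_curve_nonneg (F i) C (hFeff i) hC hnc
    have h2 : Y.inter (F i) C = Y.inter (Y.L - Y.Exc i) C :=
      Y.linEquiv_inter _ _ C (hFlin i)
    rw [Y.toAlgSurface.inter_sub_left, hLC, hExcC i] at h2
    omega
  -- adjunction : c + (-3d + e) = 2 pa - 2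
  have hKC : Y.inter Y.K C = -3 * d + e := by
    rw [Y.K_eq, Y.inter_add_left, Y.toAlgSurface.inter_neg_left,
      Y.toAlgSurface.inter_smul_left, hLC, Y.toAlgSurface.inter_sum_left,
      Finset.sum_congr rfl (fun i _ => hExcC i), ← he_def]
    ring
  have hadj : c + (-3 * d + e) = 2 * Y.pa C - 2 := by
    rw [← hKC]; exact Y.adjunction C hC
  have hpa : 0 ≤ Y.pa C := Y.pa_nonneg C hC
  -- the Hodge-type divisor W
  set W : Div := (d - 1) • Y.L - (∑ i, m i • Y.Exc i) - C with hW_def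
  have hWexp : ∀ X : Div, Y.inter W X
      = (d - 1) * Y.inter Y.L X - (∑ i, m i * Y.inter (Y.Exc i) X) - Y.inter C X := by
    intro X
    rw [hW_def, Y.toAlgSurface.inter_sub_left, Y.toAlgSurface.inter_sub_left,
      Y.toAlgSurface.inter_smul_left, Y.toAlgSurface.inter_sum_left]
    congr 2
    exact Finset.sum_congr rfl fun i _ => Y.toAlgSurface.inter_smul_left (m i) (Y.Exc i) X
  have hWL : Y.inter W Y.L = -1 := by
    rw [hWexp, Y.inter_L_L, Finset.sum_congr rfl (fun i _ => by rw [hExcL i]),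
      Y.inter_symm C Y.L, hLC]
    simp only [mul_zero, Finset.sum_const_zero, mul_one]
    ring
  have hWE : ∀ j : Fin n, Y.inter W (Y.Exc j) = 0 := by
    intro j
    rw [hWexp, Y.inter_L_Exc j]
    have hsum : (∑ i, m i * Y.inter (Y.Exc i) (Y.Exc j)) = -(m j) := by
      have h : ∀ i : Fin n, m i * Y.inter (Y.Exc i) (Y.Exc j)
          = if i = j then -(m i) else 0 := by
        intro i
        rw [Y.inter_Exc i j]
        by_cases hij : i = j <;> simp [hij]
      rw [Finset.sum_congr rfl (fun i _ => h i), Finset.sum_ite_eq' Finset.univ j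
        (fun i => -(m i)), if_pos (Finset.mem_univ j)]
    rw [hsum, Y.inter_symm C (Y.Exc j), hExcC j]
    ring
  have hWC : Y.inter W C = (d - 1) * d - Q - c := by
    rw [hWexp, hLC, ← hc_def]
    have : (∑ i, m i * Y.inter (Y.Exc i) C) = Q := by
      rw [hQ_def]
      exact Finset.sum_congr rfl fun i _ => by rw [hExcC i]; ring
    rw [this]
  have hWW : Y.inter W W = -(d - 1) - ((d - 1) * d - Q - c) := by
    have h1 : Y.inter W W
        = (d - 1) * Y.inter W Y.L - (∑ i, m i * Y.inter W (Y.Exc i)) - Y.inter W C := by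
      conv_lhs => rw [show Y.inter W W = Y.inter W ((d - 1) • Y.L
        - (∑ i, m i • Y.Exc i) - C) from by rw [← hW_def]]
      rw [Y.toAlgSurface.inter_sub_right, Y.toAlgSurface.inter_sub_right,
        Y.toAlgSurface.inter_smul_right, Y.toAlgSurface.inter_sum_right]
      congr 2
      exact Finset.sum_congr rfl fun i _ => Y.toAlgSurface.inter_smul_right (m i) W (Y.Exc i)
    rw [h1, hWL, hWC, Finset.sum_congr rfl (fun i _ => by rw [hWE i, mul_zero])]
    simp
  have hWK : Y.inter W Y.K = 3 := by
    rw [Y.inter_symm W Y.K, Y.K_eq, Y.inter_add_left, Y.toAlgSurface.inter_neg_left,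
      Y.toAlgSurface.inter_smul_left, Y.inter_symm Y.L W, hWL,
      Y.toAlgSurface.inter_sum_left,
      Finset.sum_congr rfl (fun i _ => by rw [Y.inter_symm (Y.Exc i) W, hWE i])]
    simp
  have hWWK : Y.inter W (W - Y.K) = Q + c - d * d - 2 := by
    rw [Y.toAlgSurface.inter_sub_right, hWW, hWK]
    ring
  have h0W : Y.h0 W = 0 := h0zero W (by rw [hWL]; norm_num)
  have h0KW : Y.h0 (Y.K - W) = 0 := by
    apply h0zero
    rw [Y.toAlgSurface.inter_sub_left, hKL, hWL]; norm_num
  have hRRW := Y.riemann_roch W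
  rw [Y.chiO_eq, h0W, h0KW, hWWK] at hRRW
  have hh1 : (0 : ℚ) ≤ (Y.h1 W : ℚ) := Nat.cast_nonneg _
  push_cast at hRRW
  have hhodge : (Q : ℚ) + (c : ℚ) ≤ ((d : ℚ)) ^ 2 := by nlinarith [hRRW, hh1]
  -- Cauchy-Schwarz
  have hcsZ : e ^ 2 ≤ (n : ℤ) * Q := by
    have h := sq_sum_le_card_mul_sum_sq (s := (Finset.univ : Finset (Fin n))) (f := m)
    simpa [he_def, hQ_def] using h
  -- e ≤ n * d
  have hend : e ≤ (n : ℤ) * d := by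
    calc e ≤ ∑ _i : Fin n, d := Finset.sum_le_sum (fun i _ => hmd i)
    _ = (n : ℤ) * d := by
      rw [Finset.sum_const, Finset.card_univ, Fintype.card_fin, nsmul_eq_mul]
  -- conclude
  by_contra hcon
  have hlt := not_le.mp hcon
  have hv1 : (c : ℚ) < -(1 / 12) * (n : ℚ) * ((d : ℚ) + 27) := by
    have h := lt_of_lt_of_le hlt (min_le_left _ _)
    exact_mod_cast h
  have hv2 : (c : ℚ) < -2 := by
    have h := lt_of_lt_of_le hlt (min_le_right _ _)
    exact_mod_cast h
  refine BlowupP2.endgame (n : ℚ) (d : ℚ) (Y.pa C : ℚ) (e : ℚ) (Q : ℚ) (c : ℚ)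
    (by positivity) ?_ (by exact_mod_cast hpa) (by exact_mod_cast hadj) hhodge
    (by exact_mod_cast hcsZ) (by exact_mod_cast hend) hv1 hv2
  rcases (by omega : d = 0 ∨ 1 ≤ d) with h | h
  · left; exact_mod_cast congrArg (Int.cast : ℤ → ℚ) h
  · right; exact_mod_cast h
end
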